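/- arXiv:1908.00032 — 8 statements merged into one kernel-verified Lean document; each statement's English description precedes it below -/
import Mathlib

section
/- det M = 0. -/
/-- `g c x y = c / (x - y)`. -/
noncomputable def g (c x y : ℂ) : ℂ := c / (x - y)

/-- `esym w p` is the `p`-th elementary symmetric polynomial of the entries of `w`;
it equals `1` for `p = 0` and `0` for `p` larger than the number of entries. -/
noncomputable def esym {m : ℕ} (w : Fin m → ℂ) (p : ℕ) : ℂ :=
  ∑ s ∈ Finset.powersetCard p Finset.univ, ∏ i ∈ s, w i

/-- `Y a w = ∑_{p=0}^{n} a p * σ_p(w)`. -/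
noncomputable def Y {n : ℕ} (a : Fin (n + 1) → ℂ) (w : Fin n → ℂ) : ℂ :=
  ∑ p : Fin (n + 1), a p * esym w (p : ℕ)

/-- The matrix `M_{jk} = (∏_{i≠k} g(u_k,u_i)) Y_k(û_j) - δ_{jk} (∏_i g(u_j,v_i)) Y_j(v)`. -/
noncomputable def Mmat (c : ℂ) {n : ℕ} (u : Fin (n + 1) → ℂ) (v : Fin n → ℂ)
    (a : Fin (n + 1) → Fin (n + 1) → ℂ) : Matrix (Fin (n + 1)) (Fin (n + 1)) ℂ :=
  Matrix.of fun j k =>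
    (∏ i ∈ Finset.univ.erase k, g c (u k) (u i)) * Y (fun p => a p k) (u ∘ j.succAbove)
      - (if j = k then 1 else 0) * ((∏ i, g c (u j) (v i)) * Y (fun p => a p j) v)

/-! The vector `y_j = ∏_i (u_j - v_i) / ∏_{i ≠ j} (u_j - u_i)` is a nonzero left null vector of `M`.
Its entries are the coefficients of the Lagrange interpolation of `∏_i (X - v_i)`, of degree `n`,
at the `n + 1` nodes `u`: `∏_i (X - v_i) = ∑_j y_j ∏_{i ≠ j} (X - u_i)`. Comparing coefficients
(Vieta) gives `∑_j y_j σ_p(û_j) = σ_p(v)`, hence `∑_j y_j Y_k(û_j) = Y_k(v)`, and this cancels the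
diagonal term because `∏_{i ≠ k} g(u_k, u_i) = y_k ∏_i g(u_k, v_i)`. -/

open Finset Polynomial Lagrange Matrix

theorem Lagrange.coeff_nodal_card_sub {R ι : Type*} [CommRing R] (s : Finset ι) (w : ι → R)
    {p : ℕ} (hp : p ≤ #s) :
    (nodal s w).coeff (#s - p) = (-1) ^ p * ∑ t ∈ s.powersetCard p, ∏ i ∈ t, w i := by
  have := Multiset.prod_X_sub_C_coeff (s.val.map w) (k := #s - p) (by simp)
  simp only [Multiset.card_map, card_val, Nat.sub_sub_self hp, Multiset.map_map] at this
  rw [← esymm_map_val, ← this, nodal, Finset.prod]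
  rfl

theorem Lagrange.nodal_univ_comp_succAbove {R : Type*} [CommRing R] {n : ℕ}
    (u : Fin (n + 1) → R) (j : Fin (n + 1)) :
    nodal univ (u ∘ j.succAbove) = nodal (univ.erase j) u := by
  rw [nodal, nodal, Fin.univ_succAbove n j, erase_cons, prod_map]
  rfl

theorem Lagrange.eq_sum_C_mul_nodal_erase {F ι : Type*} [Field F] [DecidableEq ι]
    {s : Finset ι} {u : ι → F} (hu : Set.InjOn u s) {P : F[X]} (hP : P.degree < #s) :
    P = ∑ j ∈ s, C (P.eval (u j) * nodalWeight s u j) * nodal (s.erase j) u := by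
  conv_lhs => rw [eq_interpolate hu hP, interpolate_apply]
  refine sum_congr rfl fun j hj => ?_
  rw [basis_eq_prod_sub_inv_mul_nodal_div hj, ← nodal_erase_eq_nodal_div hj, map_mul]
  ring

theorem coeff_nodal_univ_eq_esym {m : ℕ} (w : Fin m → ℂ) {p : ℕ} (hp : p ≤ m) :
    (nodal univ w).coeff (m - p) = (-1) ^ p * esym w p := by
  simpa [esym] using coeff_nodal_card_sub univ w (p := p) (by simpa using hp)

theorem coeff_nodal_erase_eq_esym_comp_succAbove {n : ℕ} (u : Fin (n + 1) → ℂ) (j : Fin (n + 1))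
    {p : ℕ} (hp : p ≤ n) :
    (nodal (univ.erase j) u).coeff (n - p) = (-1) ^ p * esym (u ∘ j.succAbove) p := by
  rw [← nodal_univ_comp_succAbove, coeff_nodal_univ_eq_esym _ hp]

noncomputable def nullVec {n : ℕ} (u : Fin (n + 1) → ℂ) (v : Fin n → ℂ) (j : Fin (n + 1)) : ℂ :=
  (nodal univ v).eval (u j) * nodalWeight univ u j

theorem nodal_eq_sum_nullVec_mul {n : ℕ} {u : Fin (n + 1) → ℂ} (hu : Function.Injective u)
    (v : Fin n → ℂ) :
    nodal univ v = ∑ j, C (nullVec u v j) * nodal (univ.erase j) u :=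
  eq_sum_C_mul_nodal_erase hu.injOn <| by
    simp only [degree_nodal, card_univ, Fintype.card_fin]; exact_mod_cast n.lt_succ_self

theorem sum_nullVec_mul_esym {n : ℕ} {u : Fin (n + 1) → ℂ} (hu : Function.Injective u)
    (v : Fin n → ℂ) {p : ℕ} (hp : p ≤ n) :
    ∑ j, nullVec u v j * esym (u ∘ j.succAbove) p = esym v p := by
  have h := congrArg (coeff · (n - p)) (nodal_eq_sum_nullVec_mul hu v)
  simp only [finsetSum_coeff, coeff_C_mul, coeff_nodal_univ_eq_esym v hp,
    coeff_nodal_erase_eq_esym_comp_succAbove u _ hp] at h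
  refine mul_left_cancel₀ (neg_one_pow_ne_zero p) ?_
  rw [h, mul_sum]
  exact sum_congr rfl fun j _ => by ring

theorem sum_nullVec_mul_Y {n : ℕ} {u : Fin (n + 1) → ℂ} (hu : Function.Injective u)
    (v : Fin n → ℂ) (b : Fin (n + 1) → ℂ) :
    ∑ j, nullVec u v j * Y b (u ∘ j.succAbove) = Y b v := by
  simp only [Y, mul_sum]
  rw [sum_comm]
  refine sum_congr rfl fun p _ => ?_
  rw [← sum_nullVec_mul_esym hu v (Nat.lt_succ_iff.mp p.isLt), mul_sum]
  exact sum_congr rfl fun j _ => by ring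

theorem nullVec_ne_zero {n : ℕ} {u : Fin (n + 1) → ℂ} (hu : Function.Injective u)
    {v : Fin n → ℂ} (huv : ∀ j i, u j ≠ v i) (j : Fin (n + 1)) : nullVec u v j ≠ 0 :=
  mul_ne_zero (eval_nodal_not_at_node fun i _ => huv j i)
    (nodalWeight_ne_zero hu.injOn (mem_univ j))

theorem prod_g_erase_eq_nullVec_mul_prod_g (c : ℂ) {n : ℕ} (u : Fin (n + 1) → ℂ) {v : Fin n → ℂ}
    (huv : ∀ j i, u j ≠ v i) (k : Fin (n + 1)) :
    ∏ i ∈ univ.erase k, g c (u k) (u i) = nullVec u v k * ∏ i, g c (u k) (v i) := by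
  have hv : (nodal univ v).eval (u k) ≠ 0 := eval_nodal_not_at_node fun i _ => huv k i
  simp only [g, div_eq_mul_inv, prod_mul_distrib, prod_const, card_erase_of_mem (mem_univ k),
    card_univ, Fintype.card_fin, Nat.add_sub_cancel, nullVec, nodalWeight]
  rw [eval_nodal] at hv ⊢
  rw [prod_inv_distrib, prod_inv_distrib]
  field_simp

theorem nullVec_vecMul_Mmat (c : ℂ) {n : ℕ} {u : Fin (n + 1) → ℂ} (hu : Function.Injective u)
    {v : Fin n → ℂ} (huv : ∀ j i, u j ≠ v i) (a : Fin (n + 1) → Fin (n + 1) → ℂ) :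
    nullVec u v ᵥ* Mmat c u v a = 0 := by
  funext k
  simp only [vecMul, dotProduct, Mmat, of_apply, Pi.zero_apply, mul_sub,
    sum_sub_distrib, ite_mul, one_mul, zero_mul, mul_ite, mul_zero, sum_ite_eq', mem_univ, if_true]
  rw [sub_eq_zero, ← mul_assoc, ← prod_g_erase_eq_nullVec_mul_prod_g c u huv k,
    ← sum_nullVec_mul_Y hu v, mul_sum]
  exact sum_congr rfl fun j _ => by ring

theorem det_M_eq_zero_general (c : ℂ) (n : ℕ)
    (u : Fin (n + 1) → ℂ) (hu : Function.Injective u)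
    (v : Fin n → ℂ) (huv : ∀ (j : Fin (n + 1)) (i : Fin n), u j ≠ v i)
    (a : Fin (n + 1) → Fin (n + 1) → ℂ) :
    (Mmat c u v a).det = 0 :=
  Matrix.exists_vecMul_eq_zero_iff.mp
    ⟨nullVec u v, fun h => nullVec_ne_zero hu huv 0 (congrFun h 0), nullVec_vecMul_Mmat c hu huv a⟩

/-- `det M = 0`. -/
theorem det_M_eq_zero (c : ℂ) (hc : c ≠ 0) (n : ℕ) (hn : 1 ≤ n)
    (u : Fin (n + 1) → ℂ) (hu : Function.Injective u)
    (v : Fin n → ℂ) (huv : ∀ (j : Fin (n + 1)) (i : Fin n), u j ≠ v i)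
    (a : Fin (n + 1) → Fin (n + 1) → ℂ) :
    (Mmat c u v a).det = 0 :=
  det_M_eq_zero_general c n u hu v huv a
end

section
/- Assume in addition that v_1,…,v_n are pairwise distinct. Then the vector X ∈ ℂ^{n+1} defined by X_ℓ := Δ(û_ℓ) · Ω̂_ℓ satisfies Σ_{k=1}^{n+1} M_{jk} X_k = 0 for every j = 1, …, n+1. -/
/-- The `n × (n+1)` matrix `Ω_{jk} = g(u_k, v_j) * Y_k(v^{(j → u_k)})`. -/
noncomputable def Om (c : ℂ) {n : ℕ} (u : Fin (n + 1) → ℂ) (v : Fin n → ℂ)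
    (a : Fin (n + 1) → Fin (n + 1) → ℂ) : Matrix (Fin n) (Fin (n + 1)) ℂ :=
  Matrix.of fun j k =>
    g c (u k) (v j) * Y (fun p => a p k) (Function.update v j (u k))

/-- `Ω̂_ℓ` : the determinant of the `n × n` matrix obtained from `Ω` by deleting column `ℓ`. -/
noncomputable def OmHat (c : ℂ) {n : ℕ} (u : Fin (n + 1) → ℂ) (v : Fin n → ℂ)
    (a : Fin (n + 1) → Fin (n + 1) → ℂ) (ℓ : Fin (n + 1)) : ℂ :=
  ((Om c u v a).submatrix id ℓ.succAbove).det

/-- `Δ(û_ℓ) = ∏_{j > k, j ≠ ℓ, k ≠ ℓ} g(u_j, u_k)`. -/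
noncomputable def DelHat (c : ℂ) {n : ℕ} (u : Fin (n + 1) → ℂ) (ℓ : Fin (n + 1)) : ℂ :=
  ∏ p ∈ Finset.univ.filter
      (fun p : Fin (n + 1) × Fin (n + 1) => p.2 < p.1 ∧ p.1 ≠ ℓ ∧ p.2 ≠ ℓ),
    g c (u p.1) (u p.2)

open Finset Polynomial Lagrange
open scoped Matrix

theorem Matrix.sum_neg_one_pow_mul_vecMul_mul_det_submatrix_succAbove {R : Type*} [CommRing R]
    {n : ℕ} (A : Matrix (Fin n) (Fin (n + 1)) R) (r : Fin n → R) :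
    ∑ k : Fin (n + 1), (-1) ^ (k : ℕ) * (r ᵥ* A) k * (A.submatrix id k.succAbove).det = 0 := by
  have hrow (i : Fin n) :
      ∑ k : Fin (n + 1), (-1) ^ (k : ℕ) * A i k * (A.submatrix id k.succAbove).det = 0 := by
    have hdet := Matrix.det_succ_row_zero (Matrix.of (Fin.cons (A i) A : Fin (n + 1) → _))
    rw [Matrix.det_zero_of_row_eq (Fin.succ_ne_zero i).symm rfl] at hdet
    exact hdet.symm
  simp only [Matrix.vecMul, dotProduct, Finset.mul_sum, Finset.sum_mul]
  rw [Finset.sum_comm]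
  refine Finset.sum_eq_zero fun i _ => ?_
  rw [← mul_zero (r i), ← hrow i, Finset.mul_sum]
  exact Finset.sum_congr rfl fun k _ => by ring

theorem Multiset.esymm_cons_succ {R : Type*} [CommSemiring R] (a : R) (s : Multiset R) (p : ℕ) :
    (a ::ₘ s).esymm (p + 1) = s.esymm (p + 1) + a * s.esymm p := by
  simp [Multiset.esymm, Multiset.powersetCard_cons, Multiset.map_map,
    Multiset.sum_map_mul_left]

theorem Lagrange.coeff_nodal {R ι : Type*} [CommRing R] (s : Finset ι) (v : ι → R) {p : ℕ}
    (hp : p ≤ #s) : (nodal s v).coeff (#s - p) = (-1) ^ p * (s.val.map v).esymm p := by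
  have h := Multiset.prod_X_sub_C_coeff (s.val.map v) (k := #s - p) (by simp)
  rw [Multiset.map_map, Multiset.card_map, Finset.card_val, Nat.sub_sub_self hp] at h
  rw [nodal_eq, ← h, Finset.prod_eq_multiset_prod]
  rfl

section Interpolation

variable {K ι κ : Type*} [Field K] [DecidableEq ι] {s : Finset ι} {v : ι → K}

theorem Lagrange.nodal_sub_nodal_eq_sum (hvs : Set.InjOn v s) (t : Finset κ) (w : κ → K)
    (ht : #t = #s) :
    nodal t w - nodal s v
      = ∑ i ∈ s, C (nodalWeight s v i * (nodal t w).eval (v i)) * nodal (s.erase i) v := by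
  have hdeg : (nodal t w - nodal s v).degree < #s := by
    rw [← ht, ← degree_nodal (s := t) (v := w)]
    exact degree_sub_lt_left (by rw [degree_nodal, degree_nodal, ht]) nodal_ne_zero
      (by rw [nodal_monic.leadingCoeff, nodal_monic.leadingCoeff])
  rw [eq_interpolate hvs hdeg, interpolate_apply]
  refine Finset.sum_congr rfl fun i hi => ?_
  rw [basis_eq_prod_sub_inv_mul_nodal_div hi, ← nodal_erase_eq_nodal_div hi, eval_sub,
    eval_nodal_at_node hi, sub_zero, C_mul]
  ring

theorem Lagrange.sum_nodalWeight_mul_esymm_erase (hvs : Set.InjOn v s) (t : Finset κ)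
    (w : κ → K) (ht : #t = #s) {p : ℕ} (hp : p < #s) :
    ∑ i ∈ s, nodalWeight s v i * (nodal t w).eval (v i) * ((s.erase i).val.map v).esymm p
      = (s.val.map v).esymm (p + 1) - (t.val.map w).esymm (p + 1) := by
  have h := congrArg (coeff · (#s - (p + 1))) (nodal_sub_nodal_eq_sum hvs t w ht)
  simp only [coeff_sub, finsetSum_coeff, coeff_C_mul] at h
  rw [← ht, coeff_nodal t w (by omega), ht, coeff_nodal s v (by omega)] at h
  rw [Finset.sum_congr rfl fun i hi => by
    rw [show #s - (p + 1) = #(s.erase i) - p by rw [card_erase_of_mem hi]; omega,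
      coeff_nodal _ _ (by rw [card_erase_of_mem hi]; omega)]] at h
  have hsign : (-1 : K) ^ p * (∑ i ∈ s, nodalWeight s v i * (nodal t w).eval (v i)
      * ((s.erase i).val.map v).esymm p)
      = (-1) ^ p * ((s.val.map v).esymm (p + 1) - (t.val.map w).esymm (p + 1)) := by
    rw [Finset.mul_sum]
    calc _ = ∑ i ∈ s, nodalWeight s v i * (nodal t w).eval (v i)
          * ((-1) ^ p * ((s.erase i).val.map v).esymm p) := sum_congr rfl fun i _ => by ring
      _ = _ := by rw [← h]; ring
  exact mul_left_cancel₀ (pow_ne_zero p (neg_ne_zero.mpr one_ne_zero)) hsign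

end Interpolation

theorem Fin.prod_succAbove_eq_prod_erase {M : Type*} [CommMonoid M] {n : ℕ}
    (f : Fin (n + 1) → M) (j : Fin (n + 1)) :
    ∏ i : Fin n, f (j.succAbove i) = ∏ i ∈ univ.erase j, f i := by
  rw [Fin.univ_succAbove n j, erase_cons, prod_map]
  rfl

theorem Fin.neg_one_pow_mul_prod_erase_mul_prod_filter_lt {R : Type*} [CommRing R] {n : ℕ}
    (f : Fin (n + 1) → Fin (n + 1) → R) (hf : ∀ p q, f q p = -f p q) (k : Fin (n + 1)) :
    (-1) ^ (k : ℕ) * (∏ i ∈ univ.erase k, f k i)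
        * ∏ pq ∈ univ.filter (fun pq : Fin (n + 1) × Fin (n + 1) =>
            pq.2 < pq.1 ∧ pq.1 ≠ k ∧ pq.2 ≠ k), f pq.1 pq.2
      = (-1) ^ n * ∏ pq ∈ univ.filter (fun pq : Fin (n + 1) × Fin (n + 1) => pq.2 < pq.1),
          f pq.1 pq.2 := by
  have htouch : ∏ pq ∈ (univ.filter fun pq : Fin (n + 1) × Fin (n + 1) => pq.2 < pq.1).filter
        (fun pq => ¬(pq.1 ≠ k ∧ pq.2 ≠ k)), f pq.1 pq.2
      = ∏ i ∈ univ.erase k, if i < k then f k i else f i k := by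
    symm
    apply prod_nbij' (fun i => if i < k then (k, i) else (i, k))
      (fun pq => if pq.1 = k then pq.2 else pq.1)
    all_goals intro i hi; grind
  have hsign : ∏ i ∈ univ.erase k, (if i < k then f k i else f i k)
      = (-1) ^ (n - k : ℕ) * ∏ i ∈ univ.erase k, f k i := by
    have hIoi : (univ.erase k).filter (fun i => ¬i < k) = Ioi k := by
      ext i
      simp only [mem_filter, mem_erase, mem_univ, mem_Ioi]
      grind
    calc ∏ i ∈ univ.erase k, (if i < k then f k i else f i k)
        = ∏ i ∈ univ.erase k, (if i < k then 1 else -1) * f k i :=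
          prod_congr rfl fun i _ => by split_ifs <;> simp only [hf k i, one_mul, neg_one_mul]
      _ = (-1) ^ (n - k : ℕ) * ∏ i ∈ univ.erase k, f k i := by
          rw [prod_mul_distrib, prod_ite, prod_const_one, one_mul, Finset.prod_const, hIoi,
            Fin.card_Ioi, Nat.add_sub_cancel]
  rw [← prod_filter_mul_prod_filter_not
      (univ.filter fun pq : Fin (n + 1) × Fin (n + 1) => pq.2 < pq.1)
      (fun pq => pq.1 ≠ k ∧ pq.2 ≠ k), filter_filter, htouch, hsign]
  have hn : (-1 : R) ^ n = (-1) ^ (k : ℕ) * (-1) ^ (n - k : ℕ) := by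
    rw [← pow_add, Nat.add_sub_cancel' (Fin.is_le k)]
  rw [hn]
  have hsq : ((-1 : R) ^ (n - k : ℕ)) ^ 2 = 1 := by
    rw [← pow_mul, mul_comm, pow_mul, neg_one_sq, one_pow]
  linear_combination (-((-1) ^ (k : ℕ) * (∏ i ∈ univ.erase k, f k i)
    * ∏ pq ∈ univ.filter (fun pq : Fin (n + 1) × Fin (n + 1) =>
        pq.2 < pq.1 ∧ pq.1 ≠ k ∧ pq.2 ≠ k), f pq.1 pq.2)) * hsq

theorem esym_eq_esymm {m : ℕ} (w : Fin m → ℂ) (p : ℕ) : esym w p = (univ.val.map w).esymm p :=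
  (Finset.esymm_map_val w univ p).symm

theorem esym_zero {m : ℕ} (w : Fin m → ℂ) : esym w 0 = 1 := by
  simp [esym]

theorem esym_update_succ {n : ℕ} (v : Fin n → ℂ) (i : Fin n) (x : ℂ) (p : ℕ) :
    esym (Function.update v i x) (p + 1)
      = esym v (p + 1) + (x - v i) * ((univ.erase i).val.map v).esymm p := by
  have hsplit : ∀ f : Fin n → ℂ, univ.val.map f = f i ::ₘ (univ.erase i).val.map f := fun f => by
    rw [← Multiset.map_cons, Finset.erase_val, Multiset.cons_erase (mem_univ i)]
  have hrest : (univ.erase i).val.map (Function.update v i x) = (univ.erase i).val.map v :=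
    Multiset.map_congr rfl fun l hl => Function.update_of_ne (ne_of_mem_erase (mem_def.mpr hl)) x v
  rw [esym_eq_esymm, esym_eq_esymm, hsplit, hsplit v, hrest, Function.update_self,
    Multiset.esymm_cons_succ, Multiset.esymm_cons_succ]
  ring

noncomputable def Yslope {n : ℕ} (a : Fin (n + 1) → ℂ) (v : Fin n → ℂ) (i : Fin n) : ℂ :=
  ∑ p : Fin n, a p.succ * ((univ.erase i).val.map v).esymm p

theorem Y_update {n : ℕ} (a : Fin (n + 1) → ℂ) (v : Fin n → ℂ) (i : Fin n) (x : ℂ) :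
    Y a (Function.update v i x) = Y a v + (x - v i) * Yslope a v i := by
  rw [Y, Y, Yslope, Fin.sum_univ_succ, Fin.sum_univ_succ, Fin.val_zero, esym_zero, esym_zero,
    Finset.mul_sum, add_assoc, ← Finset.sum_add_distrib]
  refine congrArg _ (Finset.sum_congr rfl fun p _ => ?_)
  rw [Fin.val_succ, esym_update_succ]
  ring

theorem sum_mul_Yslope {n : ℕ} (a : Fin (n + 1) → ℂ) {v : Fin n → ℂ}
    (hv : Function.Injective v) (w : Fin n → ℂ) :
    ∑ i, nodalWeight univ v i * (nodal univ w).eval (v i) * Yslope a v i = Y a v - Y a w := by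
  simp only [Yslope, Finset.mul_sum]
  rw [Finset.sum_comm, Y, Y, Fin.sum_univ_succ, Fin.sum_univ_succ, Fin.val_zero, esym_zero,
    esym_zero, add_sub_add_left_eq_sub, ← Finset.sum_sub_distrib]
  refine Finset.sum_congr rfl fun p _ => ?_
  rw [Fin.val_succ, esym_eq_esymm, esym_eq_esymm, ← mul_sub,
    ← sum_nodalWeight_mul_esymm_erase hv.injOn univ w rfl (by simp), Finset.mul_sum]
  exact Finset.sum_congr rfl fun i _ => by ring

theorem Y_mul_eval_nodal_add_sum {n : ℕ} (a : Fin (n + 1) → ℂ) {v : Fin n → ℂ}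
    (hv : Function.Injective v) (w : Fin n → ℂ) (x : ℂ) :
    Y a w * (nodal univ v).eval x
      + ∑ i, nodalWeight univ v i * (nodal univ w).eval (v i) * Y a (Function.update v i x)
          * (nodal (univ.erase i) v).eval x
      = Y a v * (nodal univ w).eval x := by
  have hlagrange := congrArg (eval x) (nodal_sub_nodal_eq_sum hv.injOn univ w rfl)
  simp only [eval_sub, eval_finsetSum, eval_mul, eval_C] at hlagrange
  have hnode : ∀ i, (nodal univ v).eval x = (x - v i) * (nodal (univ.erase i) v).eval x := by
    intro i
    rw [nodal_eq_mul_nodal_erase (mem_univ i), eval_mul, eval_sub, eval_X, eval_C]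
  have hsum : ∑ i, nodalWeight univ v i * (nodal univ w).eval (v i) * Y a (Function.update v i x)
        * (nodal (univ.erase i) v).eval x
      = Y a v * ∑ i, nodalWeight univ v i * (nodal univ w).eval (v i)
          * (nodal (univ.erase i) v).eval x
        + (nodal univ v).eval x * ∑ i, nodalWeight univ v i * (nodal univ w).eval (v i)
          * Yslope a v i := by
    rw [Finset.mul_sum, Finset.mul_sum, ← Finset.sum_add_distrib]
    refine Finset.sum_congr rfl fun i _ => ?_
    rw [Y_update, hnode i]
    ring
  rw [hsum, sum_mul_Yslope a hv w, ← hlagrange]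
  ring

theorem g_swap (c x y : ℂ) : g c y x = -g c x y := by
  rw [g, g, ← neg_sub, div_neg]

theorem prod_g_mul_prod_sub {ι : Type*} (c x : ℂ) (s : Finset ι) (y : ι → ℂ)
    (hy : ∀ i ∈ s, x ≠ y i) : (∏ i ∈ s, g c x (y i)) * ∏ i ∈ s, (x - y i) = c ^ #s := by
  rw [← prod_mul_distrib, ← prod_const]
  exact prod_congr rfl fun i hi => div_mul_cancel₀ c (sub_ne_zero.mpr (hy i hi))

theorem g_mul_eval_nodal {ι : Type*} [DecidableEq ι] (c x : ℂ) {s : Finset ι} (v : ι → ℂ)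
    {i : ι} (hi : i ∈ s) (hx : x ≠ v i) :
    g c x (v i) * (nodal s v).eval x = c * (nodal (s.erase i) v).eval x := by
  rw [nodal_eq_mul_nodal_erase hi, eval_mul, eval_sub, eval_X, eval_C, g, ← mul_assoc,
    div_mul_cancel₀ c (sub_ne_zero.mpr hx)]

noncomputable def Delta (c : ℂ) {n : ℕ} (u : Fin (n + 1) → ℂ) : ℂ :=
  ∏ p ∈ univ.filter (fun p : Fin (n + 1) × Fin (n + 1) => p.2 < p.1), g c (u p.1) (u p.2)

theorem neg_one_pow_mul_prod_g_mul_DelHat (c : ℂ) {n : ℕ} (u : Fin (n + 1) → ℂ)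
    (k : Fin (n + 1)) :
    (-1) ^ (k : ℕ) * (∏ i ∈ univ.erase k, g c (u k) (u i)) * DelHat c u k
      = (-1) ^ n * Delta c u :=
  Fin.neg_one_pow_mul_prod_erase_mul_prod_filter_lt (fun p q => g c (u p) (u q))
    (fun p q => g_swap c (u p) (u q)) k

section Row

variable {c : ℂ} {n : ℕ} {u : Fin (n + 1) → ℂ} {v : Fin n → ℂ}
  (a : Fin (n + 1) → Fin (n + 1) → ℂ) (j k : Fin (n + 1))

theorem neg_one_pow_mul_Mmat_mul_DelHat_mul_eval_nodal (hu : Function.Injective u)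
    (hk : ∀ i, u k ≠ v i) :
    (-1) ^ (k : ℕ) * (Mmat c u v a j k * DelHat c u k) * (nodal univ v).eval (u k)
      = (-1) ^ n * Delta c u * (Y (fun p => a p k) (u ∘ j.succAbove) * (nodal univ v).eval (u k)
          - Y (fun p => a p k) v * (nodal univ (u ∘ j.succAbove)).eval (u k)) := by
  have hsign := neg_one_pow_mul_prod_g_mul_DelHat c u k
  simp only [Mmat, Matrix.of_apply]
  by_cases hjk : j = k
  · subst hjk
    have hG : (∏ i ∈ univ.erase j, g c (u j) (u i))
        * (nodal univ (u ∘ j.succAbove)).eval (u j) = c ^ n := by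
      rw [eval_nodal, Function.comp_def, Fin.prod_succAbove_eq_prod_erase (fun i => u j - u i),
        prod_g_mul_prod_sub, card_erase_of_mem (mem_univ j), card_univ, Fintype.card_fin,
        Nat.add_sub_cancel]
      exact fun i hi h => ne_of_mem_erase hi (hu h).symm
    have hH : (∏ i, g c (u j) (v i)) * (nodal univ v).eval (u j) = c ^ n := by
      rw [eval_nodal, prod_g_mul_prod_sub _ _ _ _ fun i _ => hk i, card_univ, Fintype.card_fin]
    rw [if_pos rfl]
    linear_combination (Y (fun p => a p j) (u ∘ j.succAbove) * (nodal univ v).eval (u j)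
        - Y (fun p => a p j) v * (nodal univ (u ∘ j.succAbove)).eval (u j)) * hsign
      - (-1) ^ (j : ℕ) * DelHat c u j * Y (fun p => a p j) v * (hH - hG)
  · obtain ⟨k', hk'⟩ := Fin.exists_succAbove_eq (Ne.symm hjk)
    have hW : (nodal univ (u ∘ j.succAbove)).eval (u k) = 0 := by
      rw [← hk']
      exact eval_nodal_at_node (v := u ∘ j.succAbove) (mem_univ k')
    rw [if_neg hjk, hW]
    linear_combination Y (fun p => a p k) (u ∘ j.succAbove) * (nodal univ v).eval (u k) * hsign

theorem sum_mul_Om_mul_eval_nodal (hc : c ≠ 0) (hk : ∀ i, u k ≠ v i) (r : Fin n → ℂ) :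
    (∑ i, r i / c * Om c u v a i k) * (nodal univ v).eval (u k)
      = ∑ i, r i * Y (fun p => a p k) (Function.update v i (u k))
          * (nodal (univ.erase i) v).eval (u k) := by
  rw [Finset.sum_mul]
  refine Finset.sum_congr rfl fun i _ => ?_
  have h := g_mul_eval_nodal c (u k) v (mem_univ i) (hk i)
  simp only [Om, Matrix.of_apply]
  field_simp
  linear_combination r i * Y (fun p => a p k) (Function.update v i (u k)) * h

theorem neg_one_pow_mul_Mmat_mul_DelHat (hc : c ≠ 0) (hu : Function.Injective u)
    (hv : Function.Injective v) (huv : ∀ (j : Fin (n + 1)) (i : Fin n), u j ≠ v i) :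
    (-1) ^ (k : ℕ) * (Mmat c u v a j k * DelHat c u k)
      = ∑ i, -((-1) ^ n * Delta c u)
          * (nodalWeight univ v i * (nodal univ (u ∘ j.succAbove)).eval (v i)) / c
          * Om c u v a i k := by
  have hV : (nodal univ v).eval (u k) ≠ 0 := by
    rw [eval_nodal]
    exact prod_ne_zero_iff.mpr fun i _ => sub_ne_zero.mpr (huv k i)
  apply mul_right_cancel₀ hV
  rw [neg_one_pow_mul_Mmat_mul_DelHat_mul_eval_nodal a j k hu (huv k),
    sum_mul_Om_mul_eval_nodal a k hc (huv k)]
  have hinterp := Y_mul_eval_nodal_add_sum (fun p => a p k) hv (u ∘ j.succAbove) (u k)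
  simp only [mul_assoc, ← Finset.mul_sum] at hinterp ⊢
  linear_combination (-1) ^ n * Delta c u * hinterp

end Row

theorem minors_solve_system_general (c : ℂ) (hc : c ≠ 0) (n : ℕ)
    (u : Fin (n + 1) → ℂ) (hu : Function.Injective u)
    (v : Fin n → ℂ) (hv : Function.Injective v)
    (huv : ∀ (j : Fin (n + 1)) (i : Fin n), u j ≠ v i)
    (a : Fin (n + 1) → Fin (n + 1) → ℂ) :
    ∀ j : Fin (n + 1),
      ∑ k : Fin (n + 1), Mmat c u v a j k * (DelHat c u k * OmHat c u v a k) = 0 := by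
  intro j
  set r : Fin n → ℂ := fun i => -((-1) ^ n * Delta c u)
    * (nodalWeight univ v i * (nodal univ (u ∘ j.succAbove)).eval (v i)) / c
  have hrow (k : Fin (n + 1)) :
      (-1) ^ (k : ℕ) * (Mmat c u v a j k * DelHat c u k) = (r ᵥ* Om c u v a) k :=
    neg_one_pow_mul_Mmat_mul_DelHat a j k hc hu hv huv
  rw [← (Om c u v a).sum_neg_one_pow_mul_vecMul_mul_det_submatrix_succAbove r]
  refine Finset.sum_congr rfl fun k _ => ?_
  have hsq : ((-1 : ℂ) ^ (k : ℕ)) ^ 2 = 1 := by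
    rw [← pow_mul, mul_comm, pow_mul, neg_one_sq, one_pow]
  rw [← hrow k, OmHat]
  linear_combination
    (-(Mmat c u v a j k * DelHat c u k * ((Om c u v a).submatrix id k.succAbove).det)) * hsq

/-- the vector `X_ℓ = Δ(û_ℓ) · Ω̂_ℓ` solves the linear system
`∑_k M_{jk} X_k = 0` for every `j`. -/
theorem minors_solve_system (c : ℂ) (hc : c ≠ 0) (n : ℕ) (hn : 1 ≤ n)
    (u : Fin (n + 1) → ℂ) (hu : Function.Injective u)
    (v : Fin n → ℂ) (hv : Function.Injective v)
    (huv : ∀ (j : Fin (n + 1)) (i : Fin n), u j ≠ v i)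
    (a : Fin (n + 1) → Fin (n + 1) → ℂ) :
    ∀ j : Fin (n + 1),
      ∑ k : Fin (n + 1), Mmat c u v a j k * (DelHat c u k * OmHat c u v a k) = 0 :=
  minors_solve_system_general c hc n u hu v hv huv a
end

section
/- Assume in addition that v_1,…,v_n are pairwise distinct. Then for every X ∈ ℂ^{n+1} the following are equivalent: (i) Σ_{k=1}^{n+1} M_{jk} X_k = 0 for all j = 1, …, n+1; (ii) Σ_{k=1}^{n+1} (∏_{i≠k} g(u_k,u_i)) · Ω_{jk} · X_k = 0 for all j = 1, …, n. -/
/-!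
Write `P_w = ∏ᵢ (X + wᵢ)`, so that `Y_b(w)` is a fixed linear functional of the coefficients
of `P_w`. For `s ∉ v`, the polynomials `P_v` and `P_{v^{(l→s)}}` are, up to scalars, the Lagrange
basis of the polynomials of degree `≤ n` at the nodes `-s, -v₁, …, -vₙ`. Expanding `P_{û_j}` in
this basis with `s = u_k` and applying the functional gives `M = A · W`, where
`W_{lk} = (∏_{i≠k} g(u_k,u_i)) Ω_{lk}` and `A_{jl} = ∏_{i≠j}(u_i - v_l) / (c ∏_{i≠l}(v_i - v_l))`:
the coefficient of `P_v` is `P_{û_j}(-u_k) / P_v(-u_k)`, which vanishes for `j ≠ k` and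
produces exactly the diagonal term of `M` for `j = k`. Lagrange interpolation of
`x ↦ ∏_{i≠l}(v_i - x)` at the nodes `u_j` shows that
`B_{lj} = c ∏_{i≠l}(v_i - u_j) / ∏_{i≠j}(u_i - u_j)` satisfies `B · A = 1`, so `A` is injective
and `M X = 0 ↔ W X = 0`.
-/

open Polynomial Finset Matrix

theorem Fin.prod_erase_eq_prod_succAbove {M : Type*} [CommMonoid M] {n : ℕ} (f : Fin (n + 1) → M)
    (j : Fin (n + 1)) : ∏ i ∈ univ.erase j, f i = ∏ i, f (j.succAbove i) := by
  rw [Fin.univ_succAbove n j, erase_cons, prod_map, Fin.coe_succAboveEmb]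

section prodXAddC

variable {R : Type*} [CommRing R] {m : ℕ}

noncomputable def prodXAddC (w : Fin m → R) : R[X] := ∏ i, (X + C (w i))

theorem eval_prodXAddC (w : Fin m → R) (t : R) : (prodXAddC w).eval t = ∏ i, (t + w i) := by
  simp [prodXAddC, eval_prod]

theorem eval_neg_prodXAddC_self (w : Fin m → R) (i : Fin m) : (prodXAddC w).eval (-w i) = 0 := by
  rw [eval_prodXAddC]
  exact prod_eq_zero (mem_univ i) (neg_add_cancel _)

theorem natDegree_prodXAddC [Nontrivial R] (w : Fin m → R) : (prodXAddC w).natDegree = m := by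
  rw [prodXAddC, natDegree_prod_of_monic _ _ fun i _ => monic_X_add_C (w i)]
  simp

theorem degree_prodXAddC_le (w : Fin m → R) : (prodXAddC w).degree ≤ m := by
  nontriviality R
  exact degree_le_natDegree.trans_eq (by rw [natDegree_prodXAddC])

theorem prodXAddC_mem_degreeLT (w : Fin m → R) : prodXAddC w ∈ degreeLT R (m + 1) :=
  mem_degreeLT.2 ((degree_prodXAddC_le w).trans_lt (by exact_mod_cast m.lt_succ_self))

theorem coeff_prodXAddC (w : Fin m → R) {p : ℕ} (hp : p ≤ m) :
    (prodXAddC w).coeff (m - p) = ∑ s ∈ powersetCard p univ, ∏ i ∈ s, w i := by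
  rw [prodXAddC, prod_X_add_C_coeff _ _ (by simp)]
  simp [Nat.sub_sub_self hp]

end prodXAddC

theorem eq_sum_smul_prodXAddC_update {F : Type*} [Field F] {n : ℕ} {v : Fin n → F}
    (hv : Function.Injective v) {s : F} (hs : ∀ l, v l ≠ s) {f : F[X]} (hf : f.degree ≤ n) :
    f = (f.eval (-s) / ∏ l, (v l - s)) • prodXAddC v +
      ∑ l, (f.eval (-v l) / ((s - v l) * ∏ i ∈ univ.erase l, (v i - v l))) •
        prodXAddC (Function.update v l s) := by
  classical
  have hvs : (-s) ∉ univ.image fun l => -v l := by simpa using fun l => hs l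
  have hneg : Function.Injective fun l => -v l := neg_injective.comp hv
  refine eq_of_degree_sub_lt_of_eval_finset_eq (insert (-s) (univ.image fun l => -v l)) ?_ ?_
  · rw [card_insert_of_notMem hvs, card_image_of_injective _ hneg, card_fin, ← mem_degreeLT]
    refine Submodule.sub_mem _ (mem_degreeLT.2 ?_) (Submodule.add_mem _ ?_ (Submodule.sum_mem _ ?_))
    · exact hf.trans_lt (by exact_mod_cast n.lt_succ_self)
    · exact Submodule.smul_mem _ _ (prodXAddC_mem_degreeLT v)
    · exact fun l _ => Submodule.smul_mem _ _ (prodXAddC_mem_degreeLT _)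
  · simp only [mem_insert, mem_image, mem_univ, true_and]
    rintro x (rfl | ⟨m, rfl⟩)
    · have hupdate : ∀ l, (prodXAddC (Function.update v l s)).eval (-s) = 0 := fun l => by
        simpa using eval_neg_prodXAddC_self (Function.update v l s) l
      have hprod : ∏ l, (v l - s) ≠ 0 := prod_ne_zero_iff.2 fun l _ => sub_ne_zero.2 (hs l)
      simp [eval_finsetSum, hupdate, eval_prodXAddC, neg_add_eq_sub, hprod]
    · have hupdate : ∀ l, l ≠ m → (prodXAddC (Function.update v l s)).eval (-v m) = 0 :=
        fun l hlm => by
          simpa [Function.update_of_ne hlm.symm] using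
            eval_neg_prodXAddC_self (Function.update v l s) m
      have hself : (prodXAddC (Function.update v m s)).eval (-v m) =
          (s - v m) * ∏ i ∈ univ.erase m, (v i - v m) := by
        rw [eval_prodXAddC, ← mul_prod_erase univ _ (mem_univ m)]
        refine congrArg₂ _ (by simp [neg_add_eq_sub]) (prod_congr rfl fun i hi => ?_)
        rw [Function.update_of_ne (ne_of_mem_erase hi), neg_add_eq_sub]
      have hne : (s - v m) * ∏ i ∈ univ.erase m, (v i - v m) ≠ 0 :=
        mul_ne_zero (sub_ne_zero.2 (hs m).symm) <| prod_ne_zero_iff.2 fun i hi =>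
          sub_ne_zero.2 (hv.ne (ne_of_mem_erase hi))
      rw [eval_add, eval_finsetSum, sum_eq_single m (fun l _ hlm => by rw [eval_smul, hupdate l hlm,
        smul_zero]) (by simp)]
      simp [eval_neg_prodXAddC_self, hself, hne]

noncomputable def coeffFunctional {n : ℕ} (b : Fin (n + 1) → ℂ) : ℂ[X] →ₗ[ℂ] ℂ :=
  ∑ p : Fin (n + 1), b p • lcoeff ℂ (n - p)

theorem Y_eq_coeffFunctional {n : ℕ} (b : Fin (n + 1) → ℂ) (w : Fin n → ℂ) :
    Y b w = coeffFunctional b (prodXAddC w) := by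
  simp only [Y, coeffFunctional, LinearMap.sum_apply, LinearMap.smul_apply,
    lcoeff_apply, smul_eq_mul, esym, coeff_prodXAddC w (Nat.lt_succ_iff.1 (Fin.is_lt _))]

theorem Y_eq_add_sum_Y_update {n : ℕ} (b : Fin (n + 1) → ℂ) (w : Fin n → ℂ) {v : Fin n → ℂ}
    (hv : Function.Injective v) {s : ℂ} (hs : ∀ l, v l ≠ s) :
    Y b w = (∏ i, (w i - s)) / (∏ l, (v l - s)) * Y b v +
      ∑ l, (∏ i, (w i - v l)) / ((s - v l) * ∏ i ∈ univ.erase l, (v i - v l)) *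
        Y b (Function.update v l s) := by
  simp only [Y_eq_coeffFunctional]
  conv_lhs => rw [eq_sum_smul_prodXAddC_update hv hs (degree_prodXAddC_le w)]
  simp [eval_prodXAddC, neg_add_eq_sub]

theorem Lagrange.eval_eq_sum_eval_mul_prod_div {F ι : Type*} [Field F] [DecidableEq ι]
    {s : Finset ι} {x : ι → F} (hx : Set.InjOn x s) {f : F[X]} (hf : f.degree < #s) (t : F) :
    f.eval t = ∑ j ∈ s, f.eval (x j) * ∏ i ∈ s.erase j, (t - x i) / (x j - x i) := by
  conv_lhs => rw [Lagrange.eq_interpolate hx hf]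
  simp [Lagrange.interpolate_apply, Lagrange.basis, Lagrange.basisDivisor, eval_finsetSum,
    eval_prod, div_eq_inv_mul]

theorem Matrix.mulVec_eq_zero_iff_of_mul_eq_one {l m R : Type*} [Fintype l] [Fintype m]
    [DecidableEq m] [Semiring R] {A : Matrix l m R} {B : Matrix m l R} (hBA : B * A = 1)
    (y : m → R) : A *ᵥ y = 0 ↔ y = 0 := by
  refine ⟨fun h => ?_, fun h => by rw [h, Matrix.mulVec_zero]⟩
  rw [← Matrix.one_mulVec y, ← hBA, ← Matrix.mulVec_mulVec, h, Matrix.mulVec_zero]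


section Matrices

variable {c : ℂ} {n : ℕ} {u : Fin (n + 1) → ℂ} {v : Fin n → ℂ}

theorem prod_erase_g_mul_div_eq_prod_g (hu : Function.Injective u) (v : Fin n → ℂ)
    (k : Fin (n + 1)) :
    (∏ i ∈ univ.erase k, g c (u k) (u i)) *
        ((∏ i ∈ univ.erase k, (u i - u k)) / ∏ l, (v l - u k)) = ∏ l, g c (u k) (v l) := by
  have hnode : ∀ i ∈ univ.erase k, g c (u k) (u i) * (u i - u k) = -c := fun i hi => by
    have : u k - u i ≠ 0 := sub_ne_zero.2 (hu.ne (ne_of_mem_erase hi).symm)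
    rw [g]
    field_simp
    ring
  have hv : ∀ l, g c (u k) (v l) = -c / (v l - u k) := fun l => by
    rw [g, ← neg_sub, div_neg, neg_div]
  rw [← mul_div_assoc, ← prod_mul_distrib, prod_congr rfl hnode, prod_const, card_erase_of_mem
    (mem_univ k), card_univ, Fintype.card_fin, Nat.add_sub_cancel, prod_congr rfl fun l _ => hv l,
    prod_div_distrib, prod_const, card_univ, Fintype.card_fin]

variable (c u v) in
noncomputable def expansionMat : Matrix (Fin (n + 1)) (Fin n) ℂ :=
  Matrix.of fun j l => (∏ i ∈ univ.erase j, (u i - v l)) / (c * ∏ i ∈ univ.erase l, (v i - v l))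

variable (c u v) in
noncomputable def reducedMat (a : Fin (n + 1) → Fin (n + 1) → ℂ) :
    Matrix (Fin n) (Fin (n + 1)) ℂ :=
  Matrix.of fun l k => (∏ i ∈ univ.erase k, g c (u k) (u i)) * Om c u v a l k

theorem Mmat_eq_expansionMat_mul_reducedMat (hc : c ≠ 0) (hu : Function.Injective u)
    (hv : Function.Injective v) (huv : ∀ (j : Fin (n + 1)) (i : Fin n), u j ≠ v i)
    (a : Fin (n + 1) → Fin (n + 1) → ℂ) :
    Mmat c u v a = expansionMat c u v * reducedMat c u v a := by
  ext j k
  simp only [Mmat, Matrix.mul_apply, expansionMat, reducedMat, Om, Matrix.of_apply]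
  rw [Y_eq_add_sum_Y_update (fun p => a p k) (u ∘ j.succAbove) hv (fun l => (huv k l).symm)]
  have hprod : ∀ x, ∏ i, (u (j.succAbove i) - x) = ∏ i ∈ univ.erase j, (u i - x) := fun x =>
    (Fin.prod_erase_eq_prod_succAbove (fun i => u i - x) j).symm
  have hdiag : (∏ i ∈ univ.erase k, g c (u k) (u i)) *
      ((∏ i ∈ univ.erase j, (u i - u k)) / (∏ l, (v l - u k)) * Y (fun p => a p k) v) =
      (if j = k then 1 else 0) * ((∏ i, g c (u j) (v i)) * Y (fun p => a p j) v) := by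
    by_cases hjk : j = k
    · subst hjk
      rw [← mul_assoc, prod_erase_g_mul_div_eq_prod_g hu, if_pos rfl, one_mul]
    · rw [prod_eq_zero (mem_erase.2 ⟨Ne.symm hjk, mem_univ k⟩) (sub_self _), if_neg hjk]
      simp
  simp only [Function.comp_apply, hprod]
  rw [mul_add, hdiag, add_sub_cancel_left, mul_sum]
  refine sum_congr rfl fun l _ => ?_
  have hkl : u k - v l ≠ 0 := sub_ne_zero.2 (huv k l)
  have hl : ∏ i ∈ univ.erase l, (v i - v l) ≠ 0 := prod_ne_zero_iff.2 fun i hi =>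
    sub_ne_zero.2 (hv.ne (ne_of_mem_erase hi))
  rw [g]
  field_simp

variable (c u v) in
noncomputable def leftInvMat : Matrix (Fin n) (Fin (n + 1)) ℂ :=
  Matrix.of fun l j => c * (∏ i ∈ univ.erase l, (v i - u j)) / ∏ i ∈ univ.erase j, (u i - u j)

theorem leftInvMat_mul_expansionMat (hc : c ≠ 0) (hu : Function.Injective u)
    (hv : Function.Injective v) : leftInvMat c u v * expansionMat c u v = 1 := by
  ext l m
  have hnat : (∏ i ∈ univ.erase l, (C (v i) - X)).natDegree < #(univ : Finset (Fin (n + 1))) :=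
    calc (∏ i ∈ univ.erase l, (C (v i) - X)).natDegree
        ≤ ∑ i ∈ univ.erase l, (C (v i) - X).natDegree := natDegree_prod_le _ _
      _ ≤ ∑ i ∈ univ.erase l, 1 := by gcongr; compute_degree
      _ < #(univ : Finset (Fin (n + 1))) := by simp
  have hdeg := degree_le_natDegree.trans_lt (WithBot.coe_lt_coe.2 hnat)
  have hinterp := Lagrange.eval_eq_sum_eval_mul_prod_div hu.injOn hdeg (v m)
  simp only [eval_prod, eval_sub, eval_C, eval_X] at hinterp
  have hD : ∏ i ∈ univ.erase m, (v i - v m) ≠ 0 := prod_ne_zero_iff.2 fun i hi =>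
    sub_ne_zero.2 (hv.ne (ne_of_mem_erase hi))
  have hterm : ∀ j, leftInvMat c u v l j * expansionMat c u v j m =
      (∏ i ∈ univ.erase l, (v i - u j)) * (∏ i ∈ univ.erase j, (v m - u i) / (u j - u i)) /
        ∏ i ∈ univ.erase m, (v i - v m) := fun j => by
    have hQ : ∏ i ∈ univ.erase j, (u i - u j) ≠ 0 := prod_ne_zero_iff.2 fun i hi =>
      sub_ne_zero.2 (hu.ne (ne_of_mem_erase hi))
    have hsign : ∏ i ∈ univ.erase j, (v m - u i) / (u j - u i) =
        (∏ i ∈ univ.erase j, (u i - v m)) / ∏ i ∈ univ.erase j, (u i - u j) := by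
      rw [← prod_div_distrib]
      exact prod_congr rfl fun i _ => by rw [← neg_div_neg_eq (u i - v m), neg_sub, neg_sub]
    rw [hsign, leftInvMat, expansionMat, Matrix.of_apply, Matrix.of_apply]
    field_simp
  rw [Matrix.mul_apply, sum_congr rfl fun j _ => hterm j, ← sum_div, ← hinterp, Matrix.one_apply]
  split_ifs with hlm
  · rw [hlm, div_self hD]
  · rw [prod_eq_zero (mem_erase.2 ⟨Ne.symm hlm, mem_univ m⟩) (sub_self _), zero_div]

end Matrices

theorem system_equiv_reduced_system_general (c : ℂ) (hc : c ≠ 0) (n : ℕ)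
    (u : Fin (n + 1) → ℂ) (hu : Function.Injective u)
    (v : Fin n → ℂ) (hv : Function.Injective v)
    (huv : ∀ (j : Fin (n + 1)) (i : Fin n), u j ≠ v i)
    (a : Fin (n + 1) → Fin (n + 1) → ℂ) (X : Fin (n + 1) → ℂ) :
    (∀ j : Fin (n + 1), ∑ k : Fin (n + 1), Mmat c u v a j k * X k = 0) ↔
      (∀ j : Fin n, ∑ k : Fin (n + 1),
        (∏ i ∈ Finset.univ.erase k, g c (u k) (u i)) * Om c u v a j k * X k = 0) := by
  have h := Matrix.mulVec_eq_zero_iff_of_mul_eq_one (leftInvMat_mul_expansionMat hc hu hv)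
    (reducedMat c u v a *ᵥ X)
  rw [Matrix.mulVec_mulVec, ← Mmat_eq_expansionMat_mul_reducedMat hc hu hv huv] at h
  simpa [funext_iff, Matrix.mulVec, dotProduct, reducedMat] using h

/-- the system `M · X = 0` is equivalent to the reduced system
`∑_k (∏_{i≠k} g(u_k,u_i)) Ω_{jk} X_k = 0`, `j = 1, …, n`. -/
theorem system_equiv_reduced_system (c : ℂ) (hc : c ≠ 0) (n : ℕ) (hn : 1 ≤ n)
    (u : Fin (n + 1) → ℂ) (hu : Function.Injective u)
    (v : Fin n → ℂ) (hv : Function.Injective v)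
    (huv : ∀ (j : Fin (n + 1)) (i : Fin n), u j ≠ v i)
    (a : Fin (n + 1) → Fin (n + 1) → ℂ) (X : Fin (n + 1) → ℂ) :
    (∀ j : Fin (n + 1), ∑ k : Fin (n + 1), Mmat c u v a j k * X k = 0) ↔
      (∀ j : Fin n, ∑ k : Fin (n + 1),
        (∏ i ∈ Finset.univ.erase k, g c (u k) (u i)) * Om c u v a j k * X k = 0) :=
  system_equiv_reduced_system_general c hc n u hu v hv huv a X
end

section
/- Let u ∈ ℂ and v = (v_1,…,v_n) ∈ ℂ^n with u ≠ v_i for all i, let a_0,…,a_n ∈ ℂ, and for n-tuples w set Y(w) := Σ_{p=0}^{n} a_p σ_p(w). Define Λ(v) := (∏_{i=1}^{n} g(u,v_i)) · Y(v), regarded as a function of v_j with the other entries fixed. Then for each j = 1, …, n, (c / ∏_{i=1}^{n} g(u,v_i)) · ∂Λ(v)/∂v_j = g(u,v_j) · Y(v^{(j→u)}), where v^{(j→u)} is the n-tuple obtained from v by replacing v_j with u. -/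
namespace Multiset

variable {R : Type*} [CommSemiring R]

theorem esymm_zero (s : Multiset R) : s.esymm 0 = 1 := by
  simp [esymm]

theorem esymm_cons_succ_s5 (a : R) (s : Multiset R) (p : ℕ) :
    (a ::ₘ s).esymm (p + 1) = s.esymm (p + 1) + a * s.esymm p := by
  simp only [esymm, powersetCard_cons, map_add, sum_add, map_map, Function.comp_def, prod_cons,
    sum_map_mul_left]

theorem esymm_zero_cons (s : Multiset R) (p : ℕ) : (0 ::ₘ s).esymm p = s.esymm p := by
  cases p with
  | zero => rw [esymm_zero, esymm_zero]
  | succ p => rw [esymm_cons_succ_s5, zero_mul, add_zero]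

end Multiset

theorem esym_update_eq_esymm_cons {m : ℕ} (w : Fin m → ℂ) (j : Fin m) (t : ℂ) (p : ℕ) :
    esym (Function.update w j t) p = (t ::ₘ (Finset.univ.erase j).val.map w).esymm p := by
  have hval : (Finset.univ.val.map (Function.update w j t) : Multiset ℂ)
      = t ::ₘ (Finset.univ.erase j).val.map w := by
    rw [← Finset.insert_erase (Finset.mem_univ j), Finset.insert_val_of_notMem
      (Finset.notMem_erase j _), Multiset.map_cons, Function.update_self,
      Finset.erase_insert_eq_erase, Finset.erase_idem]
    exact congrArg _ (Multiset.map_congr rfl fun i hi =>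
      Function.update_of_ne (Finset.ne_of_mem_erase (s := Finset.univ) hi) _ _)
  rw [esym, ← Finset.esymm_map_val, hval]

theorem Y_update_eq {n : ℕ} (a : Fin (n + 1) → ℂ) (v : Fin n → ℂ) (j : Fin n) (t : ℂ) :
    Y a (Function.update v j t) =
      Y a (Function.update v j 0) + t * ∑ p : Fin n, a p.succ * esym (Function.update v j 0) p := by
  simp only [Y, Fin.sum_univ_succ, esym_update_eq_esymm_cons, Fin.val_zero, Fin.val_succ,
    Multiset.esymm_zero, Multiset.esymm_cons_succ_s5, Multiset.esymm_zero_cons, mul_add,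
    Finset.sum_add_distrib, Finset.mul_sum, mul_left_comm _ t, mul_one, add_assoc]

theorem hasDerivAt_affine_div_sub {𝕜 : Type*} [NontriviallyNormedField 𝕜] {α β u x : 𝕜}
    (hx : x ≠ u) :
    HasDerivAt (fun t => (α + t * β) / (u - t)) ((α + u * β) / (u - x) ^ 2) x := by
  have hux : u - x ≠ 0 := sub_ne_zero.2 hx.symm
  have hnum : HasDerivAt (fun t => α + t * β) β x := by
    simpa using ((hasDerivAt_id x).mul_const β).const_add α
  have hden : HasDerivAt (fun t => u - t) (-1) x := by
    simpa using (hasDerivAt_id x).const_sub u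
  refine (hnum.div hden hux).congr_deriv ?_
  ring

/-- with `Λ(v) = (∏_i g(u, v_i)) Y(v)`,
`(c / ∏_i g(u, v_i)) ∂Λ(v)/∂v_j = g(u, v_j) Y(v^{(j → u)})`. -/
theorem partial_derivative_of_eigenvalue (c : ℂ) (hc : c ≠ 0) (n : ℕ)
    (u : ℂ) (v : Fin n → ℂ) (hu : ∀ i, u ≠ v i)
    (a : Fin (n + 1) → ℂ) (j : Fin n) :
    (c / ∏ i, g c u (v i)) *
        deriv (fun t : ℂ =>
          (∏ i, g c u (Function.update v j t i)) * Y a (Function.update v j t)) (v j)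
      = g c u (v j) * Y a (Function.update v j u) := by
  classical
  set C := ∏ i ∈ Finset.univ \ {j}, g c u (v i)
  have hC : C ≠ 0 := Finset.prod_ne_zero_iff.2 fun i _ => div_ne_zero hc (sub_ne_zero.2 (hu i))
  have hprod (t : ℂ) : ∏ i, g c u (Function.update v j t i) = g c u t * C := by
    rw [← Finset.prod_update_of_mem (Finset.mem_univ j)]
    simp only [← Function.comp_apply (f := g c u), Function.comp_update]
  obtain ⟨α, β, hY⟩ : ∃ α β, ∀ t, Y a (Function.update v j t) = α + t * β :=
    ⟨_, _, Y_update_eq a v j⟩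
  have hΛ : (fun t : ℂ => (∏ i, g c u (Function.update v j t i)) * Y a (Function.update v j t))
      = fun t => c * C * ((α + t * β) / (u - t)) := by
    funext t
    rw [hprod, hY, g]
    ring
  have hprodv : ∏ i, g c u (v i) = g c u (v j) * C := by
    simpa only [Function.update_eq_self] using hprod (v j)
  have huj : u - v j ≠ 0 := sub_ne_zero.2 (hu j)
  rw [hΛ, ((hasDerivAt_affine_div_sub (hu j).symm).const_mul (c * C)).deriv, hprodv, hY, g]
  field_simp
end

section
/- Let n ≥ 0, let u_1,…,u_{n+1} ∈ ℂ be pairwise distinct, let w_1,…,w_{n+1} ∈ ℂ be pairwise distinct, and assume u_k ≠ w_m for all k,m. Define the (n+1)×(n+1) matrix W by W_{jk} := g(u_k,w_j) · (∏_{i≠k} g(u_k,u_i)) / (∏_{m=1}^{n+1} g(u_k,w_m)). Then det W = Δ(u)/Δ(w), where Δ(u) := ∏_{j>k} g(u_j,u_k) and Δ(w) := ∏_{j>k} g(w_j,w_k). -/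
/-- `Δ(u) = ∏_{j > k} g(u_j, u_k)`. -/
noncomputable def Del (c : ℂ) {m : ℕ} (u : Fin m → ℂ) : ℂ :=
  ∏ p ∈ Finset.univ.filter (fun p : Fin m × Fin m => p.2 < p.1), g c (u p.1) (u p.2)

open Finset Matrix Polynomial Lagrange

namespace Matrix

variable {R : Type*} [CommRing R] {n : ℕ}

theorem det_vandermonde_neg (v : Fin n → R) :
    (vandermonde fun i => -v i).det = (∏ i : Fin n, (-1) ^ (i : ℕ)) * (vandermonde v).det := by
  have : (vandermonde fun i => -v i)
      = vandermonde v * diagonal fun i : Fin n => (-1 : R) ^ (i : ℕ) := by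
    ext i j
    rw [mul_diagonal, vandermonde_apply, vandermonde_apply, neg_pow, mul_comm]
  rw [this, det_mul, det_diagonal, mul_comm]

theorem prod_prod_erase_sub_eq (v : Fin n → R) :
    ∏ i, ∏ j ∈ univ.erase i, (v i - v j)
      = (∏ i : Fin n, (-1) ^ (i : ℕ)) * (vandermonde v).det ^ 2 := by
  have h := prod_prod_Ioi_mul_eq_prod_prod_off_diag fun j i => v i - v j
  simp only [compl_singleton, prod_mul_distrib] at h
  rw [← h, sq, ← mul_assoc, ← det_vandermonde_neg, det_vandermonde, det_vandermonde]
  simp only [neg_sub_neg]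

theorem of_eval_eq_of_coeff_mul_vandermonde_transpose {ι : Type*} (p : ι → R[X])
    (hp : ∀ i, (p i).natDegree < n) (v : Fin n → R) :
    of (fun i k => (p i).eval (v k))
      = of (fun i (t : Fin n) => (p i).coeff t) * (vandermonde v)ᵀ := by
  ext i k
  rw [of_apply, eval_eq_sum_range' (hp i), ← Fin.sum_univ_eq_sum_range, mul_apply]
  simp [vandermonde_apply]

theorem det_of_eval_mul_det_vandermonde (p : Fin n → R[X]) (hp : ∀ i, (p i).natDegree < n)
    (v w : Fin n → R) :
    (of fun i k => (p i).eval (v k)).det * (vandermonde w).det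
      = (of fun i k => (p i).eval (w k)).det * (vandermonde v).det := by
  simp only [of_eval_eq_of_coeff_mul_vandermonde_transpose p hp, det_mul, det_transpose]
  ring

end Matrix

namespace Lagrange

variable {R : Type*} [CommRing R] {n : ℕ}

theorem det_of_eval_nodal_erase_self (w : Fin n → R) :
    (of fun j k => (nodal (univ.erase j) w).eval (w k)).det
      = (∏ i : Fin n, (-1) ^ (i : ℕ)) * (vandermonde w).det ^ 2 := by
  have : (of fun j k => (nodal (univ.erase j) w).eval (w k))
      = diagonal fun j => (nodal (univ.erase j) w).eval (w j) := by
    ext j k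
    rcases eq_or_ne j k with rfl | hjk
    · simp
    · rw [diagonal_apply_ne _ hjk, of_apply,
        eval_nodal_at_node (mem_erase.2 ⟨hjk.symm, mem_univ k⟩)]
  rw [this, det_diagonal, ← prod_prod_erase_sub_eq]
  simp [eval_nodal]

theorem det_of_eval_nodal_erase [IsDomain R] {w : Fin n → R} (hw : Function.Injective w)
    (v : Fin n → R) :
    (of fun j k => (nodal (univ.erase j) w).eval (v k)).det
      = (∏ i : Fin n, (-1) ^ (i : ℕ)) * (vandermonde w).det * (vandermonde v).det := by
  have hdeg : ∀ j : Fin n, (nodal (univ.erase j) w).natDegree < n := fun j => by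
    simp only [natDegree_nodal, card_erase_of_mem (mem_univ j), card_univ, Fintype.card_fin]
    exact Nat.sub_lt j.pos one_pos
  have h := det_of_eval_mul_det_vandermonde _ hdeg v w
  rw [det_of_eval_nodal_erase_self] at h
  refine mul_right_cancel₀ (det_vandermonde_ne_zero_iff.2 hw) ?_
  rw [h]
  ring

end Lagrange

theorem Del_eq_div_det_vandermonde (c : ℂ) {m : ℕ} (x : Fin m → ℂ) :
    Del c x = c ^ #{p : Fin m × Fin m | p.2 < p.1} / (vandermonde x).det := by
  rw [Del, det_vandermonde, ← prod_finset_product_right' {p : Fin m × Fin m | p.2 < p.1} univ Ioi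
    (f := fun a c => x a - x c) (by simp), ← prod_const, ← prod_div_distrib]
  rfl

theorem Del_div_Del {c : ℂ} (hc : c ≠ 0) {m : ℕ} (u w : Fin m → ℂ) :
    Del c u / Del c w = (vandermonde w).det / (vandermonde u).det := by
  rw [Del_eq_div_det_vandermonde, Del_eq_div_det_vandermonde,
    div_div_div_cancel_left' _ _ (pow_ne_zero _ hc)]

theorem of_g_eq_of_eval_nodal_mul_diagonal_nodalWeight {c : ℂ} (hc : c ≠ 0) {n : ℕ}
    (u w : Fin (n + 1) → ℂ) (huw : ∀ k m, u k ≠ w m) :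
    (of fun j k : Fin (n + 1) =>
        g c (u k) (w j) * (∏ i ∈ univ.erase k, g c (u k) (u i)) / ∏ m, g c (u k) (w m))
      = (of fun j k => (nodal (univ.erase j) w).eval (u k)) * diagonal (nodalWeight univ u) := by
  ext j k
  rw [mul_diagonal, of_apply, of_apply, eval_nodal, nodalWeight, prod_inv_distrib]
  simp only [g, prod_div_distrib, prod_const, card_erase_of_mem (mem_univ _), card_univ,
    Fintype.card_fin, Nat.add_sub_cancel]
  rw [← mul_prod_erase univ (fun m => u k - w m) (mem_univ j)]
  have hkj : u k - w j ≠ 0 := sub_ne_zero.2 (huw k j)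
  field_simp
  ring

theorem det_W_general (c : ℂ) (hc : c ≠ 0) (n : ℕ)
    (u : Fin (n + 1) → ℂ)
    (w : Fin (n + 1) → ℂ) (hw : Function.Injective w)
    (huw : ∀ k m : Fin (n + 1), u k ≠ w m) :
    (Matrix.of fun j k : Fin (n + 1) =>
        g c (u k) (w j) * (∏ i ∈ Finset.univ.erase k, g c (u k) (u i)) /
          (∏ m, g c (u k) (w m))).det
      = Del c u / Del c w := by
  have hsign : (∏ i : Fin (n + 1), (-1 : ℂ) ^ (i : ℕ)) ≠ 0 :=
    prod_ne_zero_iff.2 fun i _ => pow_ne_zero _ (neg_ne_zero.2 one_ne_zero)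
  have hweights : ∏ k, nodalWeight univ u k
      = ((∏ i : Fin (n + 1), (-1) ^ (i : ℕ)) * (vandermonde u).det ^ 2)⁻¹ := by
    simp only [nodalWeight, prod_inv_distrib, prod_prod_erase_sub_eq]
  rw [of_g_eq_of_eval_nodal_mul_diagonal_nodalWeight hc u w huw, det_mul, det_diagonal,
    det_of_eval_nodal_erase hw, hweights, Del_div_Del hc]
  field_simp

/-- the determinant of the matrix
`W_{jk} = g(u_k, w_j) (∏_{i≠k} g(u_k,u_i)) / (∏_m g(u_k,w_m))` equals `Δ(u)/Δ(w)`. -/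
theorem det_W (c : ℂ) (hc : c ≠ 0) (n : ℕ)
    (u : Fin (n + 1) → ℂ) (hu : Function.Injective u)
    (w : Fin (n + 1) → ℂ) (hw : Function.Injective w)
    (huw : ∀ k m : Fin (n + 1), u k ≠ w m) :
    (Matrix.of fun j k : Fin (n + 1) =>
        g c (u k) (w j) * (∏ i ∈ Finset.univ.erase k, g c (u k) (u i)) /
          (∏ m, g c (u k) (w m))).det
      = Del c u / Del c w :=
  det_W_general c hc n u w hw huw
end

section
/- Let n ≥ 0, let u_1,…,u_{n+1} ∈ ℂ be pairwise distinct, let w_1,…,w_{n+1} ∈ ℂ with u_ℓ ≠ w_m for all ℓ,m, and let t ∈ ℂ with t ≠ −u_μ for all μ. Then for each j = 1, …, n+1: Σ_{ℓ=1}^{n+1} [ g(u_ℓ,w_j) / (t + u_ℓ) ] · (∏_{i≠ℓ} g(u_ℓ,u_i)) / (∏_{m=1}^{n+1} g(u_ℓ,w_m)) = (∏_{μ≠j} (t + w_μ)) / (∏_{μ=1}^{n+1} (t + u_μ)). -/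
/-!
After the powers of `c` cancel, the `ℓ`-th summand is
`Q(v ℓ) / ((t - v ℓ) ∏_{i ≠ ℓ} (v ℓ - v i))` with nodes `v = -u` and
`Q(y) = ∏_{m ≠ j} (y + w m)`; the two sign changes `(-1)^n` coming from the numerator and the
denominator cancel. Since `deg Q = n` is less than the number of nodes, Lagrange interpolation
of `Q` at the nodes `v`, evaluated at `t`, is exactly the partial-fraction expansion of
`Q(t) / ∏_μ (t - v μ)`.
-/

open Polynomial Finset

theorem Lagrange.sum_eval_div_eq_eval_div_nodal {F ι : Type*} [Field F] [DecidableEq ι]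
    {s : Finset ι} {v : ι → F} (hvs : Set.InjOn v s) {P : F[X]} (hP : P.degree < #s)
    {x : F} (hx : ∀ i ∈ s, x ≠ v i) :
    ∑ i ∈ s, P.eval (v i) / ((x - v i) * ∏ j ∈ s.erase i, (v i - v j)) =
      P.eval x / ∏ i ∈ s, (x - v i) := by
  have hnodal : ∏ i ∈ s, (x - v i) ≠ 0 :=
    prod_ne_zero_iff.mpr fun i hi => sub_ne_zero.mpr (hx i hi)
  rw [eq_div_iff hnodal, congrArg (eval x) (Lagrange.eq_interpolate hvs hP),
    Lagrange.eval_interpolate_not_at_node _ hx, Lagrange.eval_nodal, mul_comm]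
  congr 1
  refine sum_congr rfl fun i _ => ?_
  simp only [Lagrange.nodalWeight, prod_inv_distrib]
  field_simp

theorem prod_g_eq (c a : ℂ) {ι : Type*} (s : Finset ι) (x : ι → ℂ) :
    ∏ i ∈ s, g c a (x i) = c ^ #s / ∏ i ∈ s, (a - x i) := by
  simp only [g, prod_div_distrib, prod_const]

theorem g_summand_eq {ι : Type*} [Fintype ι] [DecidableEq ι] {c : ℂ} (hc : c ≠ 0)
    {u w : ι → ℂ} {ℓ j : ι} (huw : ∀ m, u ℓ ≠ w m) (t : ℂ) :
    g c (u ℓ) (w j) / (t + u ℓ) *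
        ((∏ i ∈ univ.erase ℓ, g c (u ℓ) (u i)) / ∏ m, g c (u ℓ) (w m)) =
      (∏ m ∈ univ.erase j, (w m - u ℓ)) /
        ((t + u ℓ) * ∏ i ∈ univ.erase ℓ, (u i - u ℓ)) := by
  have hcard : #(univ.erase j) = #(univ.erase ℓ) := by simp
  have hw : ∀ m, u ℓ - w m ≠ 0 := fun m => sub_ne_zero.mpr (huw m)
  have hw' : ∏ m ∈ univ.erase j, (u ℓ - w m) ≠ 0 := prod_ne_zero_iff.mpr fun m _ => hw m
  have hcard_univ : #(univ : Finset ι) = #(univ.erase ℓ) + 1 :=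
    (card_erase_add_one (mem_univ ℓ)).symm
  rw [prod_g_eq, prod_g_eq, ← mul_prod_erase univ _ (mem_univ j), hcard_univ]
  calc _ = (∏ m ∈ univ.erase j, (u ℓ - w m)) /
          ((t + u ℓ) * ∏ i ∈ univ.erase ℓ, (u ℓ - u i)) := by
        simp only [g]; field_simp
        rw [pow_succ, ← mul_div_mul_left (_ * c) _ (hw j)]
        ring
    _ = _ := by
        simp_rw [← neg_sub (u ℓ), prod_neg, hcard, mul_left_comm _ ((-1 : ℂ) ^ _)]
        exact (mul_div_mul_left _ _ (pow_ne_zero _ (neg_ne_zero.mpr one_ne_zero))).symm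

/-- the partial-fraction summation identity
`∑_ℓ [g(u_ℓ,w_j)/(t+u_ℓ)] (∏_{i≠ℓ} g(u_ℓ,u_i)) / (∏_m g(u_ℓ,w_m))
  = (∏_{μ≠j} (t+w_μ)) / (∏_μ (t+u_μ))`. -/
theorem partial_fraction_sum (c : ℂ) (hc : c ≠ 0) (n : ℕ)
    (u : Fin (n + 1) → ℂ) (hu : Function.Injective u)
    (w : Fin (n + 1) → ℂ) (huw : ∀ ℓ m : Fin (n + 1), u ℓ ≠ w m)
    (t : ℂ) (ht : ∀ μ : Fin (n + 1), t ≠ -u μ) (j : Fin (n + 1)) :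
    ∑ ℓ : Fin (n + 1),
        (g c (u ℓ) (w j) / (t + u ℓ)) *
          ((∏ i ∈ Finset.univ.erase ℓ, g c (u ℓ) (u i)) / (∏ m, g c (u ℓ) (w m)))
      = (∏ μ ∈ Finset.univ.erase j, (t + w μ)) / (∏ μ, (t + u μ)) := by
  set Q : ℂ[X] := ∏ m ∈ univ.erase j, (X + C (w m))
  have hQ : Q.degree < #(univ : Finset (Fin (n + 1))) := by
    simp only [Q, degree_prod, degree_X_add_C, sum_const, card_erase_of_mem (mem_univ j), card_univ,
      Fintype.card_fin, nsmul_one]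
    exact_mod_cast n.lt_succ_self
  have hlagrange := Lagrange.sum_eval_div_eq_eval_div_nodal (neg_injective.comp hu).injOn hQ
    (fun μ _ => ht μ)
  simp only [Q, eval_prod, eval_add, eval_X, eval_C, Function.comp_apply, sub_neg_eq_add,
    neg_add_eq_sub] at hlagrange
  simp only [g_summand_eq hc (huw _), hlagrange]
end

section
/- Let n ≥ 0, let u_1,…,u_{n+1} ∈ ℂ be pairwise distinct, let w_1,…,w_{n+1} ∈ ℂ with u_ℓ ≠ w_m for all ℓ,m, and let a_0,…,a_n ∈ ℂ. For any n-tuple x set Y(x) := Σ_{p=0}^{n} a_p σ_p(x). Then for each j = 1, …, n+1: Σ_{ℓ=1}^{n+1} (∏_{i≠ℓ} g(u_ℓ,u_i)) · Y(û_ℓ) · g(u_ℓ,w_j) / (∏_{m=1}^{n+1} g(u_ℓ,w_m)) = Y(ŵ_j), where û_ℓ is the n-tuple (u_1,…,u_{n+1}) with u_ℓ omitted and ŵ_j is the n-tuple (w_1,…,w_{n+1}) with w_j omitted. -/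
open Finset Polynomial Lagrange

theorem Fin.prod_univ_erase_eq_prod_succAbove {M : Type*} [CommMonoid M] {n : ℕ}
    (f : Fin (n + 1) → M) (x : Fin (n + 1)) :
    ∏ i ∈ univ.erase x, f i = ∏ i : Fin n, f (x.succAbove i) := by
  rw [Fin.univ_succAbove n x, erase_cons, prod_map, Fin.coe_succAboveEmb]

theorem Lagrange.basis_eq_C_nodalWeight_mul_nodal_erase {F ι : Type*} [Field F] [DecidableEq ι]
    (s : Finset ι) (v : ι → F) (i : ι) :
    Lagrange.basis s v i = C (nodalWeight s v i) * nodal (s.erase i) v := by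
  simp only [Lagrange.basis, basisDivisor, nodalWeight, nodal, prod_mul_distrib, map_prod]

theorem coeff_nodal_univ_sub_eq_esym {m p : ℕ} (v : Fin m → ℂ) (hp : p ≤ m) :
    (nodal univ v).coeff (m - p) = (-1) ^ p * esym v p := by
  have h := Multiset.prod_X_sub_C_coeff (univ.val.map v) (k := m - p) (by simp)
  simp only [Multiset.map_map, Multiset.card_map, card_val, card_univ, Fintype.card_fin,
    Nat.sub_sub_self hp, esymm_map_val] at h
  exact h

theorem sum_div_mul_esym_succAbove {n p : ℕ} (u : Fin (n + 1) → ℂ) (hu : Function.Injective u)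
    (w : Fin n → ℂ) (hp : p ≤ n) :
    ∑ ℓ, (∏ m, (u ℓ - w m)) / (∏ i, (u ℓ - u (ℓ.succAbove i))) * esym (u ∘ ℓ.succAbove) p =
      esym w p := by
  have hinterp : nodal univ w = interpolate univ u fun ℓ => (nodal univ w).eval (u ℓ) :=
    eq_interpolate hu.injOn <| by
      simp only [degree_nodal, card_univ, Fintype.card_fin]
      exact_mod_cast n.lt_succ_self
  have herase (ℓ : Fin (n + 1)) : nodal (univ.erase ℓ) u = nodal univ (u ∘ ℓ.succAbove) := by
    simp only [nodal, Fin.prod_univ_erase_eq_prod_succAbove, Function.comp_apply]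
  have hcoeff := congrArg (coeff · (n - p)) hinterp
  simp only [interpolate_apply, basis_eq_C_nodalWeight_mul_nodal_erase, finsetSum_coeff,
    ← mul_assoc, ← C_mul, coeff_C_mul, herase, coeff_nodal_univ_sub_eq_esym _ hp, eval_nodal,
    nodalWeight, Fin.prod_univ_erase_eq_prod_succAbove] at hcoeff
  rw [← mul_right_inj' (pow_ne_zero p (neg_ne_zero.mpr one_ne_zero) : (-1 : ℂ) ^ p ≠ 0),
    hcoeff, mul_sum]
  refine sum_congr rfl fun ℓ _ => ?_
  rw [prod_inv_distrib]
  ring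

theorem sum_div_mul_Y_succAbove {n : ℕ} (u : Fin (n + 1) → ℂ) (hu : Function.Injective u)
    (w : Fin n → ℂ) (a : Fin (n + 1) → ℂ) :
    ∑ ℓ, (∏ m, (u ℓ - w m)) / (∏ i, (u ℓ - u (ℓ.succAbove i))) * Y a (u ∘ ℓ.succAbove) =
      Y a w := by
  simp only [Y, mul_sum, mul_left_comm _ (a _)]
  rw [sum_comm]
  exact sum_congr rfl fun p _ => by rw [← mul_sum, sum_div_mul_esym_succAbove u hu w p.is_le]

theorem prod_g_mul_g_div_prod_g {c : ℂ} (hc : c ≠ 0) {m : ℕ} (x : ℂ) (y : Fin m → ℂ)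
    (z : Fin (m + 1) → ℂ) (j : Fin (m + 1)) (hxz : x ≠ z j) :
    (∏ i, g c x (y i)) * g c x (z j) / ∏ k, g c x (z k) =
      (∏ k, (x - z (j.succAbove k))) / ∏ i, (x - y i) := by
  have hxz' : x - z j ≠ 0 := sub_ne_zero.mpr hxz
  simp only [g, prod_div_distrib, prod_const, card_univ, Fintype.card_fin]
  rw [Fin.prod_univ_succAbove (fun k => x - z k) j]
  field_simp
  ring

/-- the summation identity
`∑_ℓ (∏_{i≠ℓ} g(u_ℓ,u_i)) Y(û_ℓ) g(u_ℓ,w_j) / (∏_m g(u_ℓ,w_m)) = Y(ŵ_j)`. -/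
theorem sum_identity_Y (c : ℂ) (hc : c ≠ 0) (n : ℕ)
    (u : Fin (n + 1) → ℂ) (hu : Function.Injective u)
    (w : Fin (n + 1) → ℂ) (huw : ∀ ℓ m : Fin (n + 1), u ℓ ≠ w m)
    (a : Fin (n + 1) → ℂ) (j : Fin (n + 1)) :
    ∑ ℓ : Fin (n + 1),
        (∏ i ∈ Finset.univ.erase ℓ, g c (u ℓ) (u i)) * Y a (u ∘ ℓ.succAbove) *
          g c (u ℓ) (w j) / (∏ m, g c (u ℓ) (w m))
      = Y a (w ∘ j.succAbove) := by
  have hterm (ℓ : Fin (n + 1)) :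
      (∏ i ∈ univ.erase ℓ, g c (u ℓ) (u i)) * Y a (u ∘ ℓ.succAbove) * g c (u ℓ) (w j) /
          (∏ m, g c (u ℓ) (w m)) =
        (∏ k, (u ℓ - w (j.succAbove k))) / (∏ i, (u ℓ - u (ℓ.succAbove i))) *
          Y a (u ∘ ℓ.succAbove) := by
    rw [mul_right_comm _ (Y _ _), mul_div_right_comm, Fin.prod_univ_erase_eq_prod_succAbove,
      prod_g_mul_g_div_prod_g hc _ _ _ _ (huw ℓ j)]
  rw [sum_congr rfl fun ℓ _ => hterm ℓ]
  exact sum_div_mul_Y_succAbove u hu (w ∘ j.succAbove) a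
end

section
/- Let S ≥ 1, let v_1,…,v_S ∈ ℂ be pairwise distinct, let u_1,…,u_{S+1} ∈ ℂ be pairwise distinct with u_μ ≠ v_ℓ for all μ,ℓ, and let w ∈ ℂ with w ≠ −v_ℓ for all ℓ. Then for all 1 ≤ j, k ≤ S+1: Σ_{ℓ=1}^{S} g(u_j,v_ℓ) · g(u_k,v_ℓ) · [ (∏_{i≠ℓ} g(v_i,v_ℓ)) / (∏_{μ=1}^{S+1} g(u_μ,v_ℓ)) ] · (w + u_j)/(w + v_ℓ) = −δ_{jk} · (∏_{ℓ=1}^{S} g(u_j,v_ℓ)) / (∏_{μ≠j} g(u_j,u_μ)) + (∏_{μ≠k} (w + u_μ)) / (∏_{ℓ=1}^{S} (w + v_ℓ)). -/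
open Finset Polynomial

namespace Fintype

variable {α M : Type*} [CommMonoid M] [Fintype α] [DecidableEq α]

theorem prod_erase_none (f : Option α → M) :
    ∏ o ∈ univ.erase none, f o = ∏ a, f (some a) := by
  calc ∏ o ∈ univ.erase none, f o = ∏ o ∈ univ.map Function.Embedding.some, f o := by
        congr 1; ext (_ | b) <;> simp
    _ = ∏ a, f (some a) := prod_map _ _ _

theorem prod_erase_some (f : Option α → M) (a : α) :
    ∏ o ∈ univ.erase (some a), f o = f none * ∏ b ∈ univ.erase a, f (some b) := by
  rw [← prod_insertNone]
  congr 1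
  ext (_ | b) <;> simp

end Fintype

namespace Lagrange

variable {F ι : Type*} [Field F] [Fintype ι] [DecidableEq ι] {t : ι → F}

theorem eval_eq_sum_mul_prod (ht : Function.Injective t) {Q : F[X]}
    (hQ : Q.degree < Fintype.card ι) (z : F) :
    Q.eval z = ∑ i, Q.eval (t i) * ∏ p ∈ univ.erase i, (t p - z) / (t p - t i) := by
  conv_lhs => rw [eq_interpolate (f := Q) (s := univ) ht.injOn (by simpa using hQ)]
  simp only [interpolate_apply, eval_finsetSum, eval_mul, eval_C, Lagrange.basis, eval_prod,
    basisDivisor]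
  refine sum_congr rfl fun i _ => ?_
  congr 1
  refine prod_congr rfl fun p _ => ?_
  rw [eval_sub, eval_X, eval_C, ← neg_sub (t p), inv_neg, ← neg_sub z]
  ring

theorem eval_div_prod_sub_eq_add_sum (ht : Function.Injective t) {a : F} (ha : ∀ i, t i ≠ a)
    {Q : F[X]} (hQ : Q.natDegree ≤ Fintype.card ι) {z : F} (hz : ∀ i, t i ≠ z) :
    Q.eval z / ∏ i, (t i - z) = Q.eval a / ∏ i, (t i - a) +
      ∑ i, Q.eval (t i) * (a - z) / ((a - t i) * (t i - z) * ∏ p ∈ univ.erase i, (t p - t i)) := by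
  set T : Option ι → F := fun o => o.elim a t
  have hT : Function.Injective T := by
    rintro (_ | i) (_ | p) h
    · rfl
    · exact absurd h.symm (ha p)
    · exact absurd h (ha i)
    · exact congrArg some (ht h)
  have hQT : Q.degree < Fintype.card (Option ι) := by
    rw [Fintype.card_option]
    exact (degree_le_of_natDegree_le hQ).trans_lt (by exact_mod_cast Nat.lt_succ_self _)
  have key := eval_eq_sum_mul_prod hT hQT z
  rw [Fintype.sum_option, Fintype.prod_erase_none] at key
  simp only [Fintype.prod_erase_some, T, Option.elim] at key
  have hz' : ∀ i, t i - z ≠ 0 := fun i => sub_ne_zero.2 (hz i)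
  have hPz : ∏ i, (t i - z) ≠ 0 := prod_ne_zero_iff.2 fun i _ => hz' i
  rw [key, add_div, sum_div]
  congr 1
  · rw [prod_div_distrib]
    field_simp
  · refine sum_congr rfl fun i _ => ?_
    have hai : a - t i ≠ 0 := sub_ne_zero.2 (ha i).symm
    have hPiz : ∏ p ∈ univ.erase i, (t p - z) ≠ 0 := prod_ne_zero_iff.2 fun p _ => hz' p
    rw [prod_div_distrib, ← mul_prod_erase univ (fun p => t p - z) (mem_univ i)]
    have hiz := hz' i
    field_simp

end Lagrange

section

variable {c : ℂ}

theorem prod_g_eq_pow_div_prod {ι : Type*} (s : Finset ι) (x y : ι → ℂ) :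
    ∏ i ∈ s, g c (x i) (y i) = c ^ #s / ∏ i ∈ s, (x i - y i) := by
  simp only [g, prod_div_distrib, prod_const]

variable {S : ℕ} {u : Fin (S + 1) → ℂ} {v : Fin S → ℂ}

theorem g_mul_g_mul_prod_g_div_prod_g (hc : c ≠ 0) (j : Fin (S + 1)) {k : Fin (S + 1)}
    {ℓ : Fin S} (hkℓ : u k ≠ v ℓ) :
    g c (u j) (v ℓ) * g c (u k) (v ℓ) *
        ((∏ i ∈ univ.erase ℓ, g c (v i) (v ℓ)) / ∏ μ, g c (u μ) (v ℓ))
      = (∏ μ ∈ univ.erase k, (u μ - v ℓ)) / ((u j - v ℓ) * ∏ i ∈ univ.erase ℓ, (v i - v ℓ)) := by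
  obtain ⟨S, rfl⟩ : ∃ S', S = S' + 1 := ⟨S - 1, by have := ℓ.pos; omega⟩
  rw [prod_g_eq_pow_div_prod, prod_g_eq_pow_div_prod (x := u),
    ← mul_prod_erase univ (fun μ => u μ - v ℓ) (mem_univ k)]
  simp only [card_erase_of_mem (mem_univ _), card_univ, Fintype.card_fin, add_tsub_cancel_right,
    g]
  have hkℓ' := sub_ne_zero.2 hkℓ
  field_simp
  ring

theorem prod_sub_div_prod_sub_eq_ite (hc : c ≠ 0) (j k : Fin (S + 1)) :
    (∏ μ ∈ univ.erase k, (u μ - u j)) / ∏ ℓ, (v ℓ - u j)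
      = (if j = k then 1 else 0) *
          ((∏ ℓ, g c (u j) (v ℓ)) / ∏ μ ∈ univ.erase j, g c (u j) (u μ)) := by
  split_ifs with hjk
  · subst hjk
    have hcard : #(univ.erase j) = #(univ : Finset (Fin S)) := by simp
    rw [one_mul, prod_g_eq_pow_div_prod, prod_g_eq_pow_div_prod, hcard,
      div_div_div_cancel_left' _ _ (pow_ne_zero _ hc)]
    simp_rw [← neg_sub (u j)]
    rw [prod_neg, prod_neg, hcard,
      mul_div_mul_left _ _ (pow_ne_zero _ (neg_ne_zero.2 one_ne_zero))]
  · rw [zero_mul, prod_eq_zero (mem_erase.2 ⟨hjk, mem_univ j⟩) (sub_self _), zero_div]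

end

theorem partial_fraction_sum_two_general (c : ℂ) (hc : c ≠ 0) (S : ℕ)
    (v : Fin S → ℂ) (hv : Function.Injective v)
    (u : Fin (S + 1) → ℂ)
    (huv : ∀ (μ : Fin (S + 1)) (ℓ : Fin S), u μ ≠ v ℓ)
    (w : ℂ) (hw : ∀ ℓ : Fin S, w ≠ -v ℓ) (j k : Fin (S + 1)) :
    ∑ ℓ : Fin S,
        g c (u j) (v ℓ) * g c (u k) (v ℓ) *
          ((∏ i ∈ Finset.univ.erase ℓ, g c (v i) (v ℓ)) / (∏ μ, g c (u μ) (v ℓ))) *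
          ((w + u j) / (w + v ℓ))
      = -(if j = k then 1 else 0) *
            ((∏ ℓ, g c (u j) (v ℓ)) / (∏ μ ∈ Finset.univ.erase j, g c (u j) (u μ)))
          + (∏ μ ∈ Finset.univ.erase k, (w + u μ)) / (∏ ℓ, (w + v ℓ)) := by
  set Q : ℂ[X] := ∏ μ ∈ univ.erase k, (C (u μ) - X)
  have hQ : Q.natDegree ≤ Fintype.card (Fin S) := by
    calc Q.natDegree ≤ ∑ μ ∈ univ.erase k, (C (u μ) - X).natDegree := natDegree_prod_le _ _
      _ ≤ ∑ μ ∈ univ.erase k, 1 := by gcongr; compute_degree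
      _ = Fintype.card (Fin S) := by simp
  have key := Lagrange.eval_div_prod_sub_eq_add_sum hv (fun ℓ => (huv j ℓ).symm) hQ
    (z := -w) (fun ℓ h => hw ℓ (by rw [h, neg_neg]))
  have hsub_neg : ∀ x, x - -w = w + x := fun x => by ring
  simp only [Q, eval_prod, eval_sub, eval_C, eval_X, hsub_neg] at key
  rw [neg_mul, ← prod_sub_div_prod_sub_eq_ite hc, key, neg_add_cancel_left]
  refine sum_congr rfl fun ℓ _ => ?_
  rw [g_mul_g_mul_prod_g_div_prod_g hc j (huv k ℓ), div_mul_div_comm,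
    mul_right_comm (u j - v ℓ)]

/-- the second partial-fraction summation identity of the appendix. -/
theorem partial_fraction_sum_two (c : ℂ) (hc : c ≠ 0) (S : ℕ) (hS : 1 ≤ S)
    (v : Fin S → ℂ) (hv : Function.Injective v)
    (u : Fin (S + 1) → ℂ) (hu : Function.Injective u)
    (huv : ∀ (μ : Fin (S + 1)) (ℓ : Fin S), u μ ≠ v ℓ)
    (w : ℂ) (hw : ∀ ℓ : Fin S, w ≠ -v ℓ) (j k : Fin (S + 1)) :
    ∑ ℓ : Fin S,
        g c (u j) (v ℓ) * g c (u k) (v ℓ) *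
          ((∏ i ∈ Finset.univ.erase ℓ, g c (v i) (v ℓ)) / (∏ μ, g c (u μ) (v ℓ))) *
          ((w + u j) / (w + v ℓ))
      = -(if j = k then 1 else 0) *
            ((∏ ℓ, g c (u j) (v ℓ)) / (∏ μ ∈ Finset.univ.erase j, g c (u j) (u μ)))
          + (∏ μ ∈ Finset.univ.erase k, (w + u μ)) / (∏ ℓ, (w + v ℓ)) :=
  partial_fraction_sum_two_general c hc S v hv u huv w hw j k
end
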